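/- arXiv:2209.07374 — 2 statements merged into one kernel-verified Lean document; each statement's English description precedes it below -/
import Mathlib

section
/- Let Ω be a p×p symmetric positive definite matrix with spectral decomposition Ω = O Λ Oᵀ, eigenvalues λ₁,…,λ_p and orthonormal eigenvectors v₁,…,v_p. For z ∈ ℝᵖ with ‖z‖ = 1, write z = Σⱼ αⱼ vⱼ. Then ‖Ω² z zᵀ − Ω‖_F² = Σᵢ λᵢ² + Σᵢ αᵢ² (λᵢ⁴ − 2λᵢ³). -/
open Matrix Finset

/-!
In the orthonormal eigenbasis, `Ω` becomes `D = diagonal lam` and `z` becomes `α`, and the sum of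
squared entries is invariant under orthogonal conjugation. So the left-hand side equals
`∑ i, ∑ j, (lam i ^ 2 * α i * α j - δᵢⱼ lam i) ^ 2`, and expanding the square with `∑ j, α j ^ 2 = 1`
gives `lam i ^ 4 * α i ^ 2 - 2 * lam i ^ 3 * α i ^ 2 + lam i ^ 2` for row `i`.
-/

namespace Matrix

variable {n R : Type*} [Fintype n] [CommRing R]

theorem sum_sum_sq_eq_trace_transpose_mul (M : Matrix n n R) :
    ∑ i, ∑ j, M i j ^ 2 = trace (Mᵀ * M) := by
  simp only [trace, diag, mul_apply, transpose_apply, sq]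
  exact Finset.sum_comm

theorem vecMulVec_vecMul_vecMul (V : Matrix n n R) (x y : n → R) :
    vecMulVec (x ᵥ* V) (y ᵥ* V) = Vᵀ * vecMulVec x y * V := by
  rw [mul_vecMulVec, vecMulVec_mul, mulVec_transpose]

variable [DecidableEq n]

theorem transpose_mul_mul_mul_transpose_mul_mul {V : Matrix n n R} (hV : V * Vᵀ = 1)
    (A B : Matrix n n R) : Vᵀ * A * V * (Vᵀ * B * V) = Vᵀ * (A * B) * V := by
  calc Vᵀ * A * V * (Vᵀ * B * V) = Vᵀ * A * (V * Vᵀ) * B * V := by simp only [Matrix.mul_assoc]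
    _ = Vᵀ * (A * B) * V := by rw [hV, Matrix.mul_one, Matrix.mul_assoc Vᵀ A B]

theorem sum_sum_sq_transpose_mul_mul {V : Matrix n n R} (hV : V * Vᵀ = 1) (N : Matrix n n R) :
    ∑ i, ∑ j, (Vᵀ * N * V) i j ^ 2 = ∑ i, ∑ j, N i j ^ 2 := by
  have htr : (Vᵀ * N * V)ᵀ = Vᵀ * Nᵀ * V := by
    rw [transpose_mul, transpose_mul, transpose_transpose, Matrix.mul_assoc]
  rw [sum_sum_sq_eq_trace_transpose_mul, sum_sum_sq_eq_trace_transpose_mul, htr,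
    transpose_mul_mul_mul_transpose_mul_mul hV, trace_mul_cycle, ← Matrix.mul_assoc, hV,
    Matrix.one_mul]

theorem of_mul_transpose_eq_one_of_orthonormal {v : n → n → R}
    (horth : ∀ i j, v i ⬝ᵥ v j = if i = j then 1 else 0) : of v * (of v)ᵀ = 1 := by
  ext i j
  simpa [mul_apply, dotProduct, one_apply] using horth i j

theorem eq_transpose_mul_diagonal_mul {A V : Matrix n n R} {lam : n → R} (hV : V * Vᵀ = 1)
    (heig : ∀ i, A *ᵥ V i = lam i • V i) : A = Vᵀ * diagonal lam * V := by
  have hAV : A * Vᵀ = Vᵀ * diagonal lam := by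
    ext i j
    rw [mul_diagonal, transpose_apply]
    simpa [mulVec, dotProduct, mul_apply, mul_comm] using congrFun (heig j) i
  rw [← hAV, Matrix.mul_assoc, mul_eq_one_comm.mp hV, Matrix.mul_one]

theorem vecMul_dotProduct_vecMul {V : Matrix n n R} (hV : V * Vᵀ = 1) (x y : n → R) :
    (x ᵥ* V) ⬝ᵥ (y ᵥ* V) = x ⬝ᵥ y := by
  rw [← dotProduct_mulVec, ← mulVec_transpose, mulVec_mulVec, hV, one_mulVec]

theorem diagonal_sq_mul_vecMulVec_sub_diagonal_apply (lam α : n → R) (i j : n) :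
    (diagonal lam ^ 2 * vecMulVec α α - diagonal lam) i j =
      lam i ^ 2 * α i * α j - if i = j then lam i else 0 := by
  rw [sub_apply, diagonal_pow, diagonal_mul, vecMulVec_apply, diagonal_apply, Pi.pow_apply, mul_assoc]

theorem sum_sum_sq_diagonal_sq_mul_vecMulVec_sub_diagonal (lam α : n → R) (hα : α ⬝ᵥ α = 1) :
    ∑ i, ∑ j, ((diagonal lam ^ 2 * vecMulVec α α - diagonal lam) i j) ^ 2 =
      ∑ i, lam i ^ 2 + ∑ i, α i ^ 2 * (lam i ^ 4 - 2 * lam i ^ 3) := by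
  have hrow : ∀ i, ∑ j, ((diagonal lam ^ 2 * vecMulVec α α - diagonal lam) i j) ^ 2 =
      lam i ^ 2 + α i ^ 2 * (lam i ^ 4 - 2 * lam i ^ 3) := by
    intro i
    have hentry : ∀ j, ((diagonal lam ^ 2 * vecMulVec α α - diagonal lam) i j) ^ 2 =
        lam i ^ 4 * α i ^ 2 * (α j * α j) +
          if i = j then lam i ^ 2 - 2 * lam i ^ 3 * α i ^ 2 else 0 := by
      intro j
      rw [diagonal_sq_mul_vecMulVec_sub_diagonal_apply]
      split_ifs with h
      · subst h; ring
      · ring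
    rw [sum_congr rfl fun j _ => hentry j, sum_add_distrib, ← mul_sum, ← dotProduct, hα,
      sum_ite_eq, if_pos (mem_univ i)]
    ring
  rw [sum_congr rfl fun i _ => hrow i, sum_add_distrib]

end Matrix

theorem frobenius_sq_IF_unpenalised_general {p : ℕ} (Ω : Matrix (Fin p) (Fin p) ℝ)
    (lam : Fin p → ℝ) (v : Fin p → Fin p → ℝ)
    (horth : ∀ i j, v i ⬝ᵥ v j = if i = j then (1 : ℝ) else 0)
    (heig : ∀ i, Ω.mulVec (v i) = lam i • v i)
    (z : Fin p → ℝ) (hz : z ⬝ᵥ z = 1)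
    (α : Fin p → ℝ) (hα : z = ∑ i, α i • v i) :
    (∑ i, ∑ j, ((Ω ^ 2 * vecMulVec z z - Ω) i j) ^ 2) =
      (∑ i, lam i ^ 2) + ∑ i, α i ^ 2 * (lam i ^ 4 - 2 * lam i ^ 3) := by
  have hV : of v * (of v)ᵀ = 1 := of_mul_transpose_eq_one_of_orthonormal horth
  have hz_coord : z = α ᵥ* of v := by rw [hα, vecMul_eq_sum]; rfl
  have hΩ : Ω = (of v)ᵀ * diagonal lam * of v := eq_transpose_mul_diagonal_mul hV heig
  have hconj : Ω ^ 2 * vecMulVec z z - Ω =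
      (of v)ᵀ * (diagonal lam ^ 2 * vecMulVec α α - diagonal lam) * of v := by
    rw [hz_coord, vecMulVec_vecMul_vecMul, sq, sq, hΩ,
      transpose_mul_mul_mul_transpose_mul_mul hV, transpose_mul_mul_mul_transpose_mul_mul hV,
      ← Matrix.sub_mul, ← Matrix.mul_sub]
  rw [hconj, sum_sum_sq_transpose_mul_mul hV]
  refine sum_sum_sq_diagonal_sq_mul_vecMulVec_sub_diagonal lam α ?_
  rwa [← vecMul_dotProduct_vecMul hV, ← hz_coord]

/-- For symmetric positive definite `Ω` with orthonormal eigenvectors `v i`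
and eigenvalues `lam i`, and a unit vector `z = ∑ i, α i • v i`, one has
`‖Ω² z zᵀ − Ω‖_F² = ∑ i, lam i ^ 2 + ∑ i, α i ^ 2 * (lam i ^ 4 − 2 * lam i ^ 3)`. -/
theorem frobenius_sq_IF_unpenalised {p : ℕ} (Ω : Matrix (Fin p) (Fin p) ℝ)
    (hΩ : Ω.PosDef) (lam : Fin p → ℝ) (v : Fin p → Fin p → ℝ)
    (horth : ∀ i j, v i ⬝ᵥ v j = if i = j then (1 : ℝ) else 0)
    (heig : ∀ i, Ω.mulVec (v i) = lam i • v i)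
    (z : Fin p → ℝ) (hz : z ⬝ᵥ z = 1)
    (α : Fin p → ℝ) (hα : z = ∑ i, α i • v i) :
    (∑ i, ∑ j, ((Ω ^ 2 * vecMulVec z z - Ω) i j) ^ 2) =
      (∑ i, lam i ^ 2) + ∑ i, α i ^ 2 * (lam i ^ 4 - 2 * lam i ^ 3) :=
  frobenius_sq_IF_unpenalised_general Ω lam v horth heig z hz α hα
end

section
/- Let A_m = [[A₁₁, A₁₂],[A₂₁, H_m]] be a sequence of symmetric positive definite block matrices where the blocks A₁₁, A₁₂, A₂₁ are fixed and H_m is a sequence of diagonal matrices whose diagonal entries all diverge to +∞. Then A_m⁻¹ converges to the block matrix [[A₁₁⁻¹, 0],[0, 0]], provided A₁₁ is invertible. -/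
/-!
Right-multiply `A_m` by `P_m = diag(1, H_m⁻¹)`. Since `H_m⁻¹ → 0`, the product
`A_m P_m = [[A₁₁, A₁₂ H_m⁻¹], [A₂₁, 1]]` tends to the invertible lower block-triangular matrix
`L = [[A₁₁, 0], [A₂₁, 1]]`, so `A_m⁻¹ = P_m (A_m P_m)⁻¹ → diag(1, 0) L⁻¹ = diag(A₁₁⁻¹, 0)`
by continuity of matrix inversion at `L`.
-/

open Matrix Filter Topology

namespace Matrix

variable {α 𝕜 m n : Type*} [Fintype m] [Fintype n] {l : Filter α}

theorem eventually_diag_ne_zero_of_tendsto_atTop [Preorder 𝕜] [Zero 𝕜] [NoMaxOrder 𝕜]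
    {D : α → Matrix n n 𝕜} (h : ∀ j, Tendsto (fun a => D a j j) l atTop) :
    ∀ᶠ a in l, ∀ j, D a j j ≠ 0 :=
  eventually_all.mpr fun j => (h j).eventually_ne_atTop 0

variable [DecidableEq m] [DecidableEq n]

section Field

variable [Field 𝕜]

theorem IsDiag.isUnit_det {D : Matrix n n 𝕜} (hD : D.IsDiag) (hne : ∀ j, D j j ≠ 0) :
    IsUnit D.det := by
  rw [← hD.diagonal_diag, det_diagonal]
  exact isUnit_iff_ne_zero.mpr (Finset.prod_ne_zero_iff.mpr fun j _ => hne j)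

theorem IsDiag.inv_eq_diagonal_inv {D : Matrix n n 𝕜} (hD : D.IsDiag) (hne : ∀ j, D j j ≠ 0) :
    D⁻¹ = diagonal fun j => (D j j)⁻¹ := by
  refine inv_eq_left_inv ?_
  conv_lhs => arg 2; rw [← hD.diagonal_diag]
  rw [diagonal_mul_diagonal, ← diagonal_one]
  exact congrArg diagonal (funext fun j => inv_mul_cancel₀ (hne j))

end Field

theorem tendsto_inv_zero_of_isDiag [Field 𝕜] [LinearOrder 𝕜] [IsStrictOrderedRing 𝕜]
    [TopologicalSpace 𝕜] [OrderTopology 𝕜] {D : α → Matrix n n 𝕜} (hD : ∀ a, (D a).IsDiag)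
    (h : ∀ j, Tendsto (fun a => D a j j) l atTop) : Tendsto (fun a => (D a)⁻¹) l (𝓝 0) := by
  have hdiag : Tendsto (fun a => diagonal fun j => (D a j j)⁻¹) l (𝓝 (diagonal fun _ => 0)) :=
    (continuous_id.matrix_diagonal.tendsto _).comp
      (tendsto_pi_nhds.mpr fun j => tendsto_inv_atTop_zero.comp (h j))
  rw [diagonal_zero] at hdiag
  refine hdiag.congr' ?_
  filter_upwards [eventually_diag_ne_zero_of_tendsto_atTop h] with a ha
  exact ((hD a).inv_eq_diagonal_inv ha).symm

section NormedField

variable [NormedField 𝕜]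

theorem tendsto_inv_of_tendsto_mul {A P : α → Matrix n n 𝕜} {L P₀ : Matrix n n 𝕜}
    (hAP : Tendsto (fun a => A a * P a) l (𝓝 L)) (hP : Tendsto P l (𝓝 P₀))
    (hL : IsUnit L.det) : Tendsto (fun a => (A a)⁻¹) l (𝓝 (P₀ * L⁻¹)) := by
  have hinv : ContinuousAt Inv.inv L :=
    continuousAt_matrix_inv L (by rw [Ring.inverse_eq_inv']; exact continuousAt_inv₀ hL.ne_zero)
  have hdet : ∀ᶠ a in l, (A a * P a).det ≠ 0 :=
    ((continuous_id.matrix_det.tendsto L).comp hAP).eventually_ne hL.ne_zero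
  have heq : ∀ᶠ a in l, P a * (A a * P a)⁻¹ = (A a)⁻¹ := by
    filter_upwards [hdet] with a ha
    rw [det_mul] at ha
    rw [mul_inv_rev, ← Matrix.mul_assoc,
      mul_nonsing_inv _ (isUnit_iff_ne_zero.mpr (right_ne_zero_of_mul ha)), Matrix.one_mul]
  exact (hP.mul (hinv.tendsto.comp hAP)).congr' heq

theorem tendsto_inv_fromBlocks_of_tendsto_inv_zero {A : Matrix m m 𝕜} {B : Matrix m n 𝕜}
    {C : Matrix n m 𝕜} {D : α → Matrix n n 𝕜} (hA : IsUnit A.det)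
    (hD : ∀ᶠ a in l, IsUnit (D a).det) (hDinv : Tendsto (fun a => (D a)⁻¹) l (𝓝 0)) :
    Tendsto (fun a => (fromBlocks A B C (D a))⁻¹) l (𝓝 (fromBlocks A⁻¹ 0 0 0)) := by
  have hP : Tendsto (fun a => fromBlocks 1 0 0 (D a)⁻¹) l
      (𝓝 (fromBlocks (1 : Matrix m m 𝕜) 0 0 0)) :=
    ((continuous_const.matrix_fromBlocks continuous_const continuous_const
      continuous_id).tendsto 0).comp hDinv
  have hAP : Tendsto (fun a => fromBlocks A B C (D a) * fromBlocks 1 0 0 (D a)⁻¹) l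
      (𝓝 (fromBlocks A 0 C 1)) := by
    have hlim : Tendsto (fun a => fromBlocks A (B * (D a)⁻¹) C 1) l
        (𝓝 (fromBlocks A (B * (0 : Matrix n n 𝕜)) C 1)) :=
      ((continuous_const.matrix_fromBlocks (continuous_const.matrix_mul continuous_id)
        continuous_const continuous_const).tendsto 0).comp hDinv
    rw [Matrix.mul_zero] at hlim
    refine hlim.congr' ?_
    filter_upwards [hD] with a ha
    simp [fromBlocks_multiply, mul_nonsing_inv _ ha]
  have hL : IsUnit (fromBlocks A 0 C 1).det := by
    rwa [det_fromBlocks_zero₁₂, det_one, mul_one]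
  have hlimit : fromBlocks 1 0 0 (0 : Matrix n n 𝕜) * (fromBlocks A 0 C 1)⁻¹ =
      fromBlocks A⁻¹ 0 0 0 := by
    rw [inv_fromBlocks_zero₁₂_of_isUnit_iff _ _ _
      (iff_of_true ((isUnit_iff_isUnit_det _).mpr hA) isUnit_one), fromBlocks_multiply]
    simp
  simpa only [hlimit] using tendsto_inv_of_tendsto_mul hAP hP hL

end NormedField

end Matrix

theorem inv_fromBlocks_tendsto_general {s t : ℕ}
    (A11 : Matrix (Fin s) (Fin s) ℝ) (A12 : Matrix (Fin s) (Fin t) ℝ)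
    (A21 : Matrix (Fin t) (Fin s) ℝ) (H : ℕ → Matrix (Fin t) (Fin t) ℝ)
    (h11 : IsUnit A11.det)
    (hdiag : ∀ m, (H m).IsDiag)
    (hdiv : ∀ j, Tendsto (fun m => H m j j) atTop atTop) :
    ∀ q r, Tendsto (fun m => ((Matrix.fromBlocks A11 A12 A21 (H m))⁻¹) q r)
      atTop (nhds ((Matrix.fromBlocks A11⁻¹ 0 0 0) q r)) := by
  have hunit : ∀ᶠ m in atTop, IsUnit (H m).det :=
    (eventually_diag_ne_zero_of_tendsto_atTop hdiv).mono fun m hm => (hdiag m).isUnit_det hm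
  have h := tendsto_inv_fromBlocks_of_tendsto_inv_zero (B := A12) (C := A21) h11 hunit
    (tendsto_inv_zero_of_isDiag hdiag hdiv)
  exact fun q r => tendsto_pi_nhds.mp (tendsto_pi_nhds.mp h q) r

/-- If `A_m = [[A₁₁, A₁₂],[A₂₁, H m]]` is a sequence of symmetric positive
definite block matrices with fixed blocks `A₁₁` (invertible), `A₁₂ = A₂₁ᵀ`,
and `H m` diagonal with all diagonal entries diverging to `+∞`, then `A_m⁻¹`
converges entrywise to `[[A₁₁⁻¹, 0],[0, 0]]`. -/
theorem inv_fromBlocks_tendsto {s t : ℕ}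
    (A11 : Matrix (Fin s) (Fin s) ℝ) (A12 : Matrix (Fin s) (Fin t) ℝ)
    (A21 : Matrix (Fin t) (Fin s) ℝ) (H : ℕ → Matrix (Fin t) (Fin t) ℝ)
    (h11 : IsUnit A11.det) (hsym : A12 = A21ᵀ)
    (hdiag : ∀ m, (H m).IsDiag)
    (hdiv : ∀ j, Tendsto (fun m => H m j j) atTop atTop)
    (hpd : ∀ m, (Matrix.fromBlocks A11 A12 A21 (H m)).PosDef) :
    ∀ q r, Tendsto (fun m => ((Matrix.fromBlocks A11 A12 A21 (H m))⁻¹) q r)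
      atTop (nhds ((Matrix.fromBlocks A11⁻¹ 0 0 0) q r)) :=
  inv_fromBlocks_tendsto_general A11 A12 A21 H h11 hdiag hdiv
end
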